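/- arXiv:1408.1175 — 2 statements merged into one kernel-verified Lean document; each statement's English description precedes it below -/
import Mathlib

section
/- Let π: 𝒢 → M be a locally trivial bundle of locally compact groups with fiber G, and let λ be a fixed (left) Haar measure on G. For every continuous compactly supported function f: 𝒢 → ℂ, the function m ↦ ∫_{𝒢ₘ} f(x) dλ(x) (where the integral over the fiber is computed via the identification 𝒢ₘ ≅ G) is continuous on M and vanishes outside the compact set π(supp f); in particular it lies in C₀(M). -/
/-- A locally trivial bundle of locally compact groups with fiber group `G`:
`π : 𝒢 → M` is a continuous open surjection, each fiber `π⁻¹(m)` is identified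
with `G` via `φ m`, and locally `π⁻¹(U)` is homeomorphic to `U × G` compatibly
with `π` and the fiber identifications. -/
structure GroupBundle (𝒢 M G : Type*) [TopologicalSpace 𝒢] [TopologicalSpace M]
    [TopologicalSpace G] [Group G] [IsTopologicalGroup G] where
  π : 𝒢 → M
  continuous_π : Continuous π
  isOpenMap_π : IsOpenMap π
  surjective_π : Function.Surjective π
  φ : (m : M) → {x : 𝒢 // π x = m} ≃ G
  locTriv : ∀ m : M, ∃ U : Set M, IsOpen U ∧ m ∈ U ∧
    ∃ h : (π ⁻¹' U) ≃ₜ (U × G),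
      ∀ x : π ⁻¹' U, ((h x).1 : M) = π x.1 ∧ (h x).2 = φ (π x.1) ⟨x.1, rfl⟩

namespace GroupBundle

variable {𝒢 M G : Type*} [TopologicalSpace 𝒢] [TopologicalSpace M]
  [TopologicalSpace G] [Group G] [IsTopologicalGroup G]

/-- The element of the fiber over `m` with `G`-coordinate `g`. -/
def elt (B : GroupBundle 𝒢 M G) (m : M) (g : G) : 𝒢 := ((B.φ m).symm g).1

lemma π_elt (B : GroupBundle 𝒢 M G) (m : M) (g : G) : B.π (B.elt m g) = m :=
  ((B.φ m).symm g).2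

/-- The `G`-coordinate of a point of `𝒢`. -/
def coord (B : GroupBundle 𝒢 M G) (x : 𝒢) : G := B.φ (B.π x) ⟨x, rfl⟩

/-- The set of composable pairs `𝒢⁽²⁾ = {(x,y) : π x = π y}`. -/
def comp2 (B : GroupBundle 𝒢 M G) : Set (𝒢 × 𝒢) := {p | B.π p.1 = B.π p.2}

/-- Fiberwise multiplication, defined via the identifications of the fibers with `G`. -/
noncomputable def mul (B : GroupBundle 𝒢 M G) (p : B.comp2) : 𝒢 :=
  B.elt (B.π p.1.1) (B.coord p.1.1 * B.coord p.1.2)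

/-- Fiberwise inversion, defined via the identifications of the fibers with `G`. -/
noncomputable def inv (B : GroupBundle 𝒢 M G) (x : 𝒢) : 𝒢 :=
  B.elt (B.π x) (B.coord x)⁻¹

end GroupBundle

namespace GroupBundle

open MeasureTheory Filter Topology

variable {𝒢 M G E : Type*} [TopologicalSpace 𝒢] [TopologicalSpace M]
  [TopologicalSpace G] [Group G] [IsTopologicalGroup G] (B : GroupBundle 𝒢 M G)

lemma coord_eq {x : 𝒢} {m : M} (h : B.π x = m) : B.coord x = B.φ m ⟨x, h⟩ := by
  subst h; rfl

@[simp]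
lemma coord_elt (m : M) (g : G) : B.coord (B.elt m g) = g := by
  rw [B.coord_eq (B.π_elt m g)]
  exact (B.φ m).apply_symm_apply g

@[simp]
lemma elt_coord (x : 𝒢) : B.elt (B.π x) (B.coord x) = x := by
  simp [elt, coord]

lemma exists_trivialization (m : M) :
    ∃ U : Set M, IsOpen U ∧ m ∈ U ∧ ∃ h : B.π ⁻¹' U ≃ₜ U × G,
      (∀ x, (h x).2 = B.coord x.1) ∧ ∀ p, (h.symm p).1 = B.elt p.1 p.2 := by
  obtain ⟨U, hU, hmU, h, hh⟩ := B.locTriv m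
  refine ⟨U, hU, hmU, h, fun x => (hh x).2, fun p => ?_⟩
  have hp : h (h.symm p) = p := h.apply_symm_apply p
  have hπ : B.π (h.symm p).1 = p.1 := by rw [← (hh _).1, hp]
  have hcoord : B.coord (h.symm p).1 = p.2 := by
    have hsnd := (hh (h.symm p)).2
    rw [hp] at hsnd
    exact hsnd.symm
  rw [← hπ, ← hcoord, elt_coord]

lemma continuous_coord : Continuous B.coord := by
  refine continuous_iff_continuousAt.2 fun x => ?_
  obtain ⟨U, hU, hxU, h, hcoord, -⟩ := B.exists_trivialization (B.π x)
  have hcont : ContinuousOn B.coord (B.π ⁻¹' U) :=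
    continuousOn_iff_continuous_domRestrict.2 <|
      (continuous_snd.comp h.continuous).congr fun y => hcoord y
  exact hcont.continuousAt ((hU.preimage B.continuous_π).mem_nhds hxU)

lemma continuous_elt : Continuous (Function.uncurry B.elt) := by
  refine continuous_iff_continuousAt.2 fun ⟨m, g⟩ => ?_
  obtain ⟨U, hU, hmU, h, -, helt⟩ := B.exists_trivialization m
  have hcont : ContinuousOn (Function.uncurry B.elt) (U ×ˢ Set.univ) := by
    refine continuousOn_iff_continuous_domRestrict.2 <|
      (continuous_subtype_val.comp (h.symm.continuous.comp ?_)).congr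
        fun q => helt (⟨q.1.1, q.2.1⟩, q.1.2)
    exact ((continuous_fst.comp continuous_subtype_val).subtype_mk _).prodMk
      (continuous_snd.comp continuous_subtype_val)
  exact hcont.continuousAt ((hU.prod isOpen_univ).mem_nhds ⟨hmU, trivial⟩)

lemma apply_elt_eq_zero_of_notMem_image_coord [Zero E] {f : 𝒢 → E} {m : M} {g : G}
    (hg : g ∉ B.coord '' tsupport f) : f (B.elt m g) = 0 := by
  by_contra hne
  exact hg ⟨B.elt m g, subset_tsupport f hne, B.coord_elt m g⟩

variable [NormedAddCommGroup E] [NormedSpace ℝ E] [MeasurableSpace G] (μ : Measure G)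

noncomputable def fiberIntegral (f : 𝒢 → E) (m : M) : E := ∫ g, f (B.elt m g) ∂μ

lemma fiberIntegral_eq_zero_of_notMem {f : 𝒢 → E} {m : M} (hm : m ∉ B.π '' tsupport f) :
    B.fiberIntegral μ f m = 0 := by
  have hzero : ∀ g, f (B.elt m g) = 0 := fun g => by
    by_contra hne
    exact hm ⟨B.elt m g, subset_tsupport f hne, B.π_elt m g⟩
  simp [fiberIntegral, hzero]

lemma tendsto_fiberIntegral_cocompact {f : 𝒢 → E} (hsupp : HasCompactSupport f) :
    Tendsto (B.fiberIntegral μ f) (cocompact M) (𝓝 0) :=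
  tendsto_nhds_of_eventually_eq <|
    mem_of_superset (hsupp.image B.continuous_π).compl_mem_cocompact
      fun _ => B.fiberIntegral_eq_zero_of_notMem μ

/-- The integrand `(m, g) ↦ f (elt m g)` is continuous by local triviality, and for every `m`
its support in `g` lies in the fixed compact set `coord '' tsupport f`. -/
lemma continuous_fiberIntegral [OpensMeasurableSpace G] [IsFiniteMeasureOnCompacts μ]
    {f : 𝒢 → E} (hf : Continuous f) (hsupp : HasCompactSupport f) :
    Continuous (B.fiberIntegral μ f) :=
  continuousOn_univ.1 <| continuousOn_integral_of_compact_support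
    (hsupp.image B.continuous_coord) (hf.comp B.continuous_elt).continuousOn
    fun _ _ _ hg => B.apply_elt_eq_zero_of_notMem_image_coord hg

end GroupBundle

open MeasureTheory
open scoped ZeroAtInfty

theorem statement1_general {𝒢 M G : Type*} [TopologicalSpace 𝒢] [TopologicalSpace M]
    [TopologicalSpace G] [Group G] [IsTopologicalGroup G]
    [MeasurableSpace G] [BorelSpace G]
    (B : GroupBundle 𝒢 M G) (μ : Measure G) [μ.IsHaarMeasure]
    (f : 𝒢 → ℂ) (hf : Continuous f) (hsupp : HasCompactSupport f) :
    (Continuous fun m : M => ∫ g : G, f (B.elt m g) ∂μ) ∧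
    IsCompact (B.π '' tsupport f) ∧
    (∀ m : M, m ∉ B.π '' tsupport f → ∫ g : G, f (B.elt m g) ∂μ = 0) ∧
    ∃ F : C₀(M, ℂ), ∀ m : M, F m = ∫ g : G, f (B.elt m g) ∂μ := by
  have hcont := B.continuous_fiberIntegral μ hf hsupp
  exact ⟨hcont, hsupp.image B.continuous_π, fun _ => B.fiberIntegral_eq_zero_of_notMem μ,
    ⟨⟨⟨_, hcont⟩, B.tendsto_fiberIntegral_cocompact μ hsupp⟩, fun _ => rfl⟩⟩

/-- for a locally trivial bundle of locally compact groups with Haar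
measure `μ` on the fiber group `G`, and `f : 𝒢 → ℂ` continuous with compact support,
the fiber-integral function `m ↦ ∫_{𝒢ₘ} f dλ` is continuous, vanishes outside the
compact set `π(supp f)`, and is given by an element of `C₀(M, ℂ)`. -/
theorem statement1 {𝒢 M G : Type*} [TopologicalSpace 𝒢] [TopologicalSpace M]
    [TopologicalSpace G] [Group G] [IsTopologicalGroup G]
    [LocallyCompactSpace 𝒢] [T2Space 𝒢] [LocallyCompactSpace M] [T2Space M]
    [LocallyCompactSpace G] [T2Space G]
    [MeasurableSpace G] [BorelSpace G]
    (B : GroupBundle 𝒢 M G) (μ : Measure G) [μ.IsHaarMeasure]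
    (f : 𝒢 → ℂ) (hf : Continuous f) (hsupp : HasCompactSupport f) :
    (Continuous fun m : M => ∫ g : G, f (B.elt m g) ∂μ) ∧
    IsCompact (B.π '' tsupport f) ∧
    (∀ m : M, m ∉ B.π '' tsupport f → ∫ g : G, f (B.elt m g) ∂μ = 0) ∧
    ∃ F : C₀(M, ℂ), ∀ m : M, F m = ∫ g : G, f (B.elt m g) ∂μ :=
  statement1_general B μ f hf hsupp
end

section
/- Let A be a C₀(M)-algebra over a locally compact Hausdorff space M and F₁, F₂ ⊆ M closed sets, with quotients A_F := A/I_F. Then the sequence 0 → A_{F₁∪F₂} → A_{F₁} ⊕ A_{F₂} → A_{F₁∩F₂} → 0 is exact, where the first map sends [a]_{F₁∪F₂} ↦ ([a]_{F₁}, [a]_{F₂}) and the second sends ([a]_{F₁}, [b]_{F₂}) ↦ [a−b]_{F₁∩F₂}. -/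
/-!
Every element `a` of `I_F` is approximately fixed by `Φ(ψ)` for suitable cutoffs `ψ`, i.e.
`[0, 1]`-valued functions vanishing on `F`: for generators `Φ(φ)a` take `ψ = 1` where `|φ| ≥ δ`
(Urysohn), and the property survives sums because `1 - Φ(ψ₁ + ψ₂ - ψ₁ψ₂) = (1 - Φ(ψ₁))(1 - Φ(ψ₂))`,
and limits.

If `a ∈ I_{F₁} ∩ I_{F₂}` is approximately fixed by `Φ(ψ₁)` and `Φ(ψ₂)`, then `Φ(ψ₁ψ₂)a ∈ I_{F₁∪F₂}`
approximates `a`; this is injectivity. Exactness in the middle amounts to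
`I_{F₁∩F₂} = I_{F₁} + I_{F₂}`. For `a ∈ I_{F₁∩F₂}` approximately fixed by `Φ(ψ)`, a partition of
unity `χ₁ + χ₂ = 1` on the compact set `{|ψ| ≥ δ}`, subordinate to `F₁ᶜ, F₂ᶜ`, splits `a` up to a
small error into `Φ(χ₁ψ)a ∈ I_{F₁}` and `Φ(χ₂ψ)a ∈ I_{F₂}`, both of norm at most `‖a‖`. Iterating on
the error and summing the resulting geometric series gives an exact splitting. Surjectivity is
trivial: `[a]` is the image of `([a], 0)`.
-/

open scoped ZeroAtInfty MultiplierAlgebra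

variable {M : Type*} [TopologicalSpace M] [LocallyCompactSpace M] [T2Space M]
variable {A : Type*} [NonUnitalNormedRing A] [StarRing A] [CStarRing A] [NormedStarGroup A]
  [CompleteSpace A] [NormedSpace ℂ A] [StarModule ℂ A]
  [SMulCommClass ℂ A A] [IsScalarTower ℂ A A]

/-- For a `C₀(M)`-algebra `(A, Φ)` and a closed set `F ⊆ M`, the ideal
`I_F = closure (span {Φ(φ)a : φ ∈ C₀(M∖F), a ∈ A})`, where `C₀(M∖F)` is identified
with the functions in `C₀(M)` vanishing on `F`. -/
def IdealF (Φ : C₀(M, ℂ) →⋆ₙₐ[ℂ] 𝓜(ℂ, A)) (F : Set M) : Set A :=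
  closure (Submodule.span ℂ
    {x : A | ∃ (φ : C₀(M, ℂ)) (a : A), (∀ m ∈ F, φ m = 0) ∧ x = (Φ φ).fst a} : Set A)

noncomputable instance : NonUnitalCStarAlgebra A :=
  { ‹NonUnitalNormedRing A›, ‹StarRing A›, ‹CStarRing A›, ‹NormedSpace ℂ A›,
    ‹IsScalarTower ℂ A A›, ‹SMulCommClass ℂ A A›, ‹StarModule ℂ A›, ‹CompleteSpace A› with }

open Set Filter Topology

theorem tendsto_sum_range_of_tendsto_zero {E : Type*} [AddCommGroup E] [TopologicalSpace E]
    [IsTopologicalAddGroup E] {u w : ℕ → E} (hw : ∀ n, u (n + 1) = u n - w n)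
    (hu : Tendsto u atTop (𝓝 0)) :
    Tendsto (fun n => ∑ k ∈ Finset.range n, w k) atTop (𝓝 (u 0)) := by
  have hpartial : ∀ n, ∑ k ∈ Finset.range n, w k = u 0 - u n := by
    intro n
    induction n with
    | zero => simp
    | succ n ih => rw [Finset.sum_range_succ, ih, hw]; abel
  simpa [hpartial] using (tendsto_const_nhds (x := u 0)).sub hu

theorem exists_add_eq_of_forall_approx {E : Type*} [NormedAddCommGroup E] [CompleteSpace E]
    {σ : Type*} [SetLike σ E] [AddSubmonoidClass σ E] {S T : σ}
    (hS : IsClosed (S : Set E)) (hT : IsClosed (T : Set E)) {U : Set E} {C : ℝ}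
    (happrox : ∀ x ∈ U, ∀ ε > 0, ∃ y ∈ S, ∃ z ∈ T,
      x - y - z ∈ U ∧ ‖x - y - z‖ < ε ∧ ‖y‖ ≤ C * ‖x‖ ∧ ‖z‖ ≤ C * ‖x‖)
    {x : E} (hx : x ∈ U) : ∃ y ∈ S, ∃ z ∈ T, y + z = x := by
  choose! Y hYS Z hZT hU hlt hY hZ using happrox
  have hr : ∀ n : ℕ, 0 < (2 : ℝ)⁻¹ ^ (n + 1) := fun n => by positivity
  let u : ℕ → E := fun n =>
    Nat.rec x (fun k v => v - Y v ((2 : ℝ)⁻¹ ^ (k + 1)) - Z v ((2 : ℝ)⁻¹ ^ (k + 1))) n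
  set y : ℕ → E := fun n => Y (u n) ((2 : ℝ)⁻¹ ^ (n + 1))
  set z : ℕ → E := fun n => Z (u n) ((2 : ℝ)⁻¹ ^ (n + 1))
  have hu_succ : ∀ n, u (n + 1) = u n - (y n + z n) := fun n => sub_sub _ _ _
  have hu_mem : ∀ n, u n ∈ U := by
    intro n
    induction n with
    | zero => exact hx
    | succ n ih => exact hU _ ih _ (hr n)
  have hu_le : ∀ n, ‖u n‖ ≤ (‖x‖ + 1) * 2⁻¹ ^ n := by
    rintro (_ | n)
    · simp [u]
    · calc ‖u (n + 1)‖ ≤ 2⁻¹ ^ (n + 1) := (hlt _ (hu_mem n) _ (hr n)).le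
        _ ≤ (‖x‖ + 1) * 2⁻¹ ^ (n + 1) :=
          le_mul_of_one_le_left (hr n).le (by linarith [norm_nonneg x])
  have hbound : ∀ n, C * ‖u n‖ ≤ |C| * ((‖x‖ + 1) * 2⁻¹ ^ n) := fun n =>
    mul_le_mul (le_abs_self C) (hu_le n) (norm_nonneg _) (abs_nonneg C)
  have hgeom : Summable fun n : ℕ => |C| * ((‖x‖ + 1) * (2 : ℝ)⁻¹ ^ n) :=
    ((summable_geometric_of_lt_one (by norm_num) (by norm_num)).mul_left _).mul_left _
  have hy : Summable y :=
    .of_norm_bounded hgeom fun n => (hY _ (hu_mem n) _ (hr n)).trans (hbound n)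
  have hz : Summable z :=
    .of_norm_bounded hgeom fun n => (hZ _ (hu_mem n) _ (hr n)).trans (hbound n)
  have hu_zero : Tendsto u atTop (𝓝 0) := by
    refine squeeze_zero_norm hu_le ?_
    simpa using (tendsto_pow_atTop_nhds_zero_of_lt_one (by norm_num : (0 : ℝ) ≤ 2⁻¹)
      (by norm_num)).const_mul (‖x‖ + 1)
  refine ⟨∑' n, y n, tsum_mem hS fun n => hYS _ (hu_mem n) _ (hr n),
    ∑' n, z n, tsum_mem hT fun n => hZT _ (hu_mem n) _ (hr n), ?_⟩
  exact tendsto_nhds_unique (hy.hasSum.add hz.hasSum).tendsto_sum_nat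
    (tendsto_sum_range_of_tendsto_zero hu_succ hu_zero)

namespace ZeroAtInftyContinuousMap

variable {X : Type*} [TopologicalSpace X]

theorem norm_le_of_forall_le {β : Type*} [SeminormedAddCommGroup β] {f : C₀(X, β)} {C : ℝ}
    (hC : 0 ≤ C) (h : ∀ x, ‖f x‖ ≤ C) : ‖f‖ ≤ C := by
  rw [← norm_toBCF_eq_norm]
  exact (BoundedContinuousFunction.norm_le hC).2 h

theorem isCompact_setOf_le_norm {β : Type*} [SeminormedAddCommGroup β] (f : C₀(X, β)) {δ : ℝ}
    (hδ : 0 < δ) : IsCompact {x | δ ≤ ‖f x‖} := by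
  obtain ⟨K, hK, hKf⟩ := mem_cocompact.1 ((zero_at_infty f) (Metric.ball_mem_nhds 0 hδ))
  refine hK.of_isClosed_subset (isClosed_le continuous_const f.continuous.norm) fun x hx => ?_
  by_contra hxK
  exact (not_lt.2 hx) (by simpa using hKf hxK)

theorem norm_sub_mul_le {R : Type*} [NormedRing R] {f h : C₀(X, R)} {δ : ℝ} (hδ : 0 ≤ δ)
    (h_one : ∀ x, δ ≤ ‖f x‖ → h x = 1) (h_le : ∀ x, ‖1 - h x‖ ≤ 1) : ‖f - h * f‖ ≤ δ := by
  refine norm_le_of_forall_le hδ fun x => ?_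
  have hx : (f - h * f) x = (1 - h x) * f x := by simp [sub_mul]
  rw [hx]
  by_cases hfx : δ ≤ ‖f x‖
  · simp [h_one x hfx, hδ]
  · calc ‖(1 - h x) * f x‖ ≤ ‖1 - h x‖ * ‖f x‖ := norm_mul_le _ _
      _ ≤ 1 * ‖f x‖ := by gcongr; exact h_le x
      _ ≤ δ := by linarith

def ofReal : C₀(X, ℝ) →ₙ+* C₀(X, ℂ) where
  toFun f := ⟨⟨fun x => (f x : ℂ), by fun_prop⟩,
    by simpa [Function.comp_def] using
      (Complex.continuous_ofReal.tendsto 0).comp (zero_at_infty f)⟩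
  map_mul' f g := by ext; simp
  map_zero' := by ext; simp
  map_add' f g := by ext; simp

@[simp]
theorem ofReal_apply (f : C₀(X, ℝ)) (x : X) : ofReal f x = f x := rfl

@[simp]
theorem norm_ofReal (f : C₀(X, ℝ)) : ‖ofReal f‖ = ‖f‖ := by
  refine le_antisymm (norm_le_of_forall_le (norm_nonneg _) fun x => ?_)
    (norm_le_of_forall_le (norm_nonneg _) fun x => ?_)
  · simpa using f.toBCF.norm_coe_le_norm x
  · simpa using (ofReal f).toBCF.norm_coe_le_norm x

end ZeroAtInftyContinuousMap

section Cutoff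

variable {X : Type*} [TopologicalSpace X]

structure IsCutoff (F : Set X) (ψ : C₀(X, ℝ)) : Prop where
  eq_zero : ∀ x ∈ F, ψ x = 0
  mem_Icc : ∀ x, ψ x ∈ Icc (0 : ℝ) 1

namespace IsCutoff

variable {F F₁ F₂ : Set X} {ψ ψ₁ ψ₂ : C₀(X, ℝ)}

theorem zero : IsCutoff F 0 := ⟨fun _ _ => rfl, fun _ => ⟨le_rfl, zero_le_one⟩⟩

theorem norm_le_one (hψ : IsCutoff F ψ) : ‖ψ‖ ≤ 1 :=
  ZeroAtInftyContinuousMap.norm_le_of_forall_le zero_le_one fun x => by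
    rw [Real.norm_eq_abs, abs_le]
    exact ⟨by linarith [(hψ.mem_Icc x).1], (hψ.mem_Icc x).2⟩

theorem mul (h₁ : IsCutoff F₁ ψ₁) (h₂ : IsCutoff F₂ ψ₂) : IsCutoff (F₁ ∪ F₂) (ψ₁ * ψ₂) where
  eq_zero x hx := by
    rcases hx with hx | hx <;> simp [h₁.eq_zero x, h₂.eq_zero x, hx]
  mem_Icc x :=
    ⟨mul_nonneg (h₁.mem_Icc x).1 (h₂.mem_Icc x).1,
      mul_le_one₀ (h₁.mem_Icc x).2 (h₂.mem_Icc x).1 (h₂.mem_Icc x).2⟩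

theorem add_sub_mul (h₁ : IsCutoff F₁ ψ₁) (h₂ : IsCutoff F₂ ψ₂) :
    IsCutoff (F₁ ∩ F₂) (ψ₁ + ψ₂ - ψ₁ * ψ₂) where
  eq_zero x hx := by simp [h₁.eq_zero x hx.1, h₂.eq_zero x hx.2]
  mem_Icc x := by
    obtain ⟨h₁0, h₁1⟩ := h₁.mem_Icc x
    obtain ⟨h₂0, h₂1⟩ := h₂.mem_Icc x
    simp only [ZeroAtInftyContinuousMap.sub_apply, ZeroAtInftyContinuousMap.add_apply,
      ZeroAtInftyContinuousMap.mul_apply]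
    constructor <;> nlinarith

end IsCutoff

variable [LocallyCompactSpace X] [T2Space X]

theorem exists_isCutoff_eqOn_one {K F : Set X} (hK : IsCompact K) (hF : IsClosed F)
    (hKF : Disjoint K F) : ∃ ψ : C₀(X, ℝ), IsCutoff F ψ ∧ EqOn ψ 1 K := by
  obtain ⟨ψ, hψK, hψF, hψc, hψI⟩ := exists_continuous_one_zero_of_isCompact hK hF hKF
  exact ⟨⟨ψ, hψc.is_zero_at_infty⟩, ⟨fun x hx => hψF hx, hψI⟩, hψK⟩

theorem exists_isCutoff_add_eqOn_one {K F₁ F₂ : Set X} (hK : IsCompact K) (hF₁ : IsClosed F₁)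
    (hF₂ : IsClosed F₂) (hKF : Disjoint K (F₁ ∩ F₂)) :
    ∃ ψ₁ ψ₂ : C₀(X, ℝ), IsCutoff F₁ ψ₁ ∧ IsCutoff F₂ ψ₂ ∧ EqOn ⇑(ψ₁ + ψ₂) 1 K := by
  obtain ⟨ψ, hψs, hψK, hψI, hψc⟩ := exists_continuous_sum_one_of_isOpen_isCompact
    (s := ![F₁ᶜ, F₂ᶜ]) (by simp [Fin.forall_fin_two, hF₁.isOpen_compl, hF₂.isOpen_compl]) hK
    fun x hx => by
      simpa [Fin.exists_fin_two, ← not_and_or] using disjoint_left.1 hKF hx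
  have hψF : ∀ i, ∀ x, x ∉ ![F₁ᶜ, F₂ᶜ] i → ψ i x = 0 := fun i x hx =>
    image_eq_zero_of_notMem_tsupport fun h => hx (hψs i h)
  refine ⟨⟨ψ 0, (hψc 0).is_zero_at_infty⟩, ⟨ψ 1, (hψc 1).is_zero_at_infty⟩,
    ⟨fun x hx => hψF 0 x (by simpa using hx), hψI 0⟩,
    ⟨fun x hx => hψF 1 x (by simpa using hx), hψI 1⟩, fun x hx => ?_⟩
  show ψ 0 x + ψ 1 x = 1
  simpa [Fin.sum_univ_two] using hψK hx

end Cutoff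

open ZeroAtInftyContinuousMap (ofReal ofReal_apply norm_sub_mul_le)

section RealAction

variable {X : Type*} [TopologicalSpace X] {B : Type*} [NonUnitalCStarAlgebra B]
  (Φ : C₀(X, ℂ) →⋆ₙₐ[ℂ] 𝓜(ℂ, B))

theorem norm_fst_apply_le (φ : C₀(X, ℂ)) (a : B) : ‖(Φ φ).fst a‖ ≤ ‖φ‖ * ‖a‖ :=
  calc ‖(Φ φ).fst a‖ ≤ ‖(Φ φ).fst‖ * ‖a‖ := (Φ φ).fst.le_opNorm a
    _ = ‖Φ φ‖ * ‖a‖ := by rw [DoubleCentralizer.norm_fst]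
    _ ≤ ‖φ‖ * ‖a‖ := by gcongr; exact NonUnitalStarAlgHom.norm_apply_le Φ φ

noncomputable def realAction : C₀(X, ℝ) →ₙ+* (B →L[ℂ] B) where
  toFun ψ := (Φ (ofReal ψ)).fst
  map_mul' ψ₁ ψ₂ := by simp
  map_zero' := by simp
  map_add' ψ₁ ψ₂ := by simp

theorem realAction_apply (ψ : C₀(X, ℝ)) (a : B) : realAction Φ ψ a = (Φ (ofReal ψ)).fst a :=
  rfl

theorem norm_realAction_apply_le (ψ : C₀(X, ℝ)) (a : B) : ‖realAction Φ ψ a‖ ≤ ‖ψ‖ * ‖a‖ := by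
  simpa [realAction_apply] using norm_fst_apply_le Φ (ofReal ψ) a

theorem realAction_comm (ψ₁ ψ₂ : C₀(X, ℝ)) (a : B) :
    realAction Φ ψ₁ (realAction Φ ψ₂ a) = realAction Φ ψ₂ (realAction Φ ψ₁ a) := by
  rw [← mul_apply_eq_comp, ← map_mul, mul_comm, map_mul, mul_apply_eq_comp]

variable {Φ} {F : Set X} {ψ : C₀(X, ℝ)}

theorem IsCutoff.norm_realAction_apply_le (hψ : IsCutoff F ψ) (a : B) :
    ‖realAction Φ ψ a‖ ≤ ‖a‖ :=
  (_root_.norm_realAction_apply_le Φ ψ a).trans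
    (mul_le_of_le_one_left (norm_nonneg a) hψ.norm_le_one)

theorem IsCutoff.norm_sub_realAction_apply_le (hψ : IsCutoff F ψ) (a : B) :
    ‖a - realAction Φ ψ a‖ ≤ 2 * ‖a‖ := by
  linarith [norm_sub_le a (realAction Φ ψ a), hψ.norm_realAction_apply_le (Φ := Φ) a]

variable (Φ F) in
def IsApproxFixed (a : B) : Prop :=
  ∀ ε > 0, ∃ ψ : C₀(X, ℝ), IsCutoff F ψ ∧ ‖a - realAction Φ ψ a‖ < ε

theorem IsApproxFixed.add {a b : B} (ha : IsApproxFixed Φ F a) (hb : IsApproxFixed Φ F b) :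
    IsApproxFixed Φ F (a + b) := by
  intro ε hε
  obtain ⟨ψ₁, hψ₁, ha⟩ := ha (ε / 4) (by positivity)
  obtain ⟨ψ₂, hψ₂, hb⟩ := hb (ε / 4) (by positivity)
  refine ⟨ψ₁ + ψ₂ - ψ₁ * ψ₂, by simpa using hψ₁.add_sub_mul hψ₂, ?_⟩
  set u := a - realAction Φ ψ₁ a
  set v := b - realAction Φ ψ₂ b
  -- With `T = realAction Φ`: `1 - T (ψ₁ + ψ₂ - ψ₁ ψ₂) = (1 - T ψ₂) (1 - T ψ₁)`, and the
  -- factors commute.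
  have key : a + b - realAction Φ (ψ₁ + ψ₂ - ψ₁ * ψ₂) (a + b) =
      (u - realAction Φ ψ₂ u) + (v - realAction Φ ψ₁ v) := by
    simp only [u, v, map_sub, map_add, map_mul, sub_apply, add_apply, mul_apply_eq_comp,
      realAction_comm Φ ψ₂ ψ₁ a]
    abel
  calc ‖a + b - realAction Φ (ψ₁ + ψ₂ - ψ₁ * ψ₂) (a + b)‖ ≤ 2 * ‖u‖ + 2 * ‖v‖ :=
        key ▸ norm_add_le_of_le (hψ₂.norm_sub_realAction_apply_le u)
          (hψ₁.norm_sub_realAction_apply_le v)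
    _ < ε := by linarith

theorem IsApproxFixed.smul {a : B} (ha : IsApproxFixed Φ F a) (c : ℂ) :
    IsApproxFixed Φ F (c • a) := by
  intro ε hε
  obtain ⟨ψ, hψ, ha⟩ := ha (ε / (‖c‖ + 1)) (by positivity)
  refine ⟨ψ, hψ, ?_⟩
  calc ‖c • a - realAction Φ ψ (c • a)‖ = ‖c‖ * ‖a - realAction Φ ψ a‖ := by
        rw [map_smul, ← smul_sub, norm_smul]
    _ ≤ (‖c‖ + 1) * ‖a - realAction Φ ψ a‖ := by gcongr; linarith
    _ < ε := by rwa [← lt_div_iff₀' (by positivity)]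

variable (Φ F) in
theorem isClosed_setOf_isApproxFixed : IsClosed {a : B | IsApproxFixed Φ F a} := by
  refine isClosed_of_closure_subset fun a ha ε hε => ?_
  obtain ⟨b, hb, hab⟩ := Metric.mem_closure_iff.1 ha (ε / 4) (by positivity)
  obtain ⟨ψ, hψ, hbψ⟩ := hb (ε / 2) (by positivity)
  refine ⟨ψ, hψ, ?_⟩
  have key : a - realAction Φ ψ a =
      (b - realAction Φ ψ b) + ((a - b) - realAction Φ ψ (a - b)) := by
    simp only [map_sub]
    abel
  calc ‖a - realAction Φ ψ a‖ ≤ ‖b - realAction Φ ψ b‖ + 2 * ‖a - b‖ :=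
        key ▸ norm_add_le_of_le le_rfl (hψ.norm_sub_realAction_apply_le _)
    _ < ε := by rw [dist_eq_norm] at hab; linarith

theorem isApproxFixed_fst_apply [LocallyCompactSpace X] [T2Space X] (hF : IsClosed F)
    {φ : C₀(X, ℂ)} (hφ : ∀ x ∈ F, φ x = 0) (a : B) : IsApproxFixed Φ F ((Φ φ).fst a) := by
  intro ε hε
  set δ := ε / (‖a‖ + 1)
  have hδ : 0 < δ := by positivity
  obtain ⟨ψ, hψ, hψ_one⟩ := exists_isCutoff_eqOn_one (φ.isCompact_setOf_le_norm hδ) hF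
    (disjoint_left.2 fun x hx hxF => by simp [hφ x hxF] at hx; linarith)
  refine ⟨ψ, hψ, ?_⟩
  have key : (Φ φ).fst a - realAction Φ ψ ((Φ φ).fst a) = (Φ (φ - ofReal ψ * φ)).fst a := by
    simp [realAction_apply]
  have hsmall : ‖φ - ofReal ψ * φ‖ ≤ δ := by
    refine norm_sub_mul_le hδ.le (fun x hx => by simp [hψ_one hx]) fun x => ?_
    rw [ofReal_apply, ← Complex.ofReal_one, ← Complex.ofReal_sub, Complex.norm_real,
      Real.norm_eq_abs, abs_le]
    constructor <;> linarith [(hψ.mem_Icc x).1, (hψ.mem_Icc x).2]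
  calc ‖(Φ φ).fst a - realAction Φ ψ ((Φ φ).fst a)‖ ≤ ‖φ - ofReal ψ * φ‖ * ‖a‖ :=
        key ▸ norm_fst_apply_le Φ _ a
    _ ≤ δ * ‖a‖ := by gcongr
    _ < δ * (‖a‖ + 1) := by gcongr; linarith
    _ = ε := div_mul_cancel₀ ε (by positivity)

end RealAction

section IdealF

variable {X : Type*} [TopologicalSpace X] {B : Type*} [NonUnitalCStarAlgebra B]
  (Φ : C₀(X, ℂ) →⋆ₙₐ[ℂ] 𝓜(ℂ, B))

-- Its carrier is `IdealF Φ F` by definition.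
def idealSubmodule (F : Set X) : Submodule ℂ B :=
  (Submodule.span ℂ
    {x : B | ∃ (φ : C₀(X, ℂ)) (a : B), (∀ m ∈ F, φ m = 0) ∧ x = (Φ φ).fst a}).topologicalClosure

theorem isClosed_idealF (F : Set X) : IsClosed (IdealF Φ F) :=
  isClosed_closure

theorem antitone_idealF : Antitone (IdealF Φ) := fun _ _ hFG =>
  closure_mono <| Submodule.span_mono fun _ ⟨φ, a, hφ, hx⟩ => ⟨φ, a, fun m hm => hφ m (hFG hm), hx⟩

theorem fst_apply_mem_idealF {F : Set X} {φ : C₀(X, ℂ)} (hφ : ∀ m ∈ F, φ m = 0) (a : B) :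
    (Φ φ).fst a ∈ IdealF Φ F :=
  subset_closure (Submodule.subset_span ⟨φ, a, hφ, rfl⟩)

theorem realAction_apply_mem_idealF {F : Set X} {ψ : C₀(X, ℝ)} (hψ : ∀ m ∈ F, ψ m = 0) (a : B) :
    realAction Φ ψ a ∈ IdealF Φ F :=
  fst_apply_mem_idealF Φ (fun m hm => by simp [hψ m hm]) a

variable [LocallyCompactSpace X] [T2Space X]

theorem exists_isCutoff_norm_sub_realAction_lt {F : Set X} (hF : IsClosed F) {a : B}
    (ha : a ∈ IdealF Φ F) {ε : ℝ} (hε : 0 < ε) :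
    ∃ ψ : C₀(X, ℝ), IsCutoff F ψ ∧ ‖a - realAction Φ ψ a‖ < ε := by
  refine closure_minimal (fun b hb => ?_) (isClosed_setOf_isApproxFixed Φ F) ha ε hε
  induction hb using Submodule.span_induction with
  | mem b hb =>
    obtain ⟨φ, a, hφ, rfl⟩ := hb
    exact isApproxFixed_fst_apply hF hφ a
  | zero => exact fun ε hε => ⟨0, .zero, by simpa using hε⟩
  | add b c _ _ hb hc => exact hb.add hc
  | smul c b _ hb => exact hb.smul c

theorem idealF_union {F₁ F₂ : Set X} (hF₁ : IsClosed F₁) (hF₂ : IsClosed F₂) :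
    IdealF Φ (F₁ ∪ F₂) = IdealF Φ F₁ ∩ IdealF Φ F₂ := by
  refine Subset.antisymm (subset_inter (antitone_idealF Φ subset_union_left)
    (antitone_idealF Φ subset_union_right)) fun a ⟨ha₁, ha₂⟩ => ?_
  rw [← (isClosed_idealF Φ _).closure_eq, Metric.mem_closure_iff]
  intro ε hε
  obtain ⟨ψ₁, hψ₁, h₁⟩ := exists_isCutoff_norm_sub_realAction_lt Φ hF₁ ha₁ (half_pos hε)
  obtain ⟨ψ₂, hψ₂, h₂⟩ := exists_isCutoff_norm_sub_realAction_lt Φ hF₂ ha₂ (half_pos hε)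
  refine ⟨realAction Φ (ψ₁ * ψ₂) a, realAction_apply_mem_idealF Φ (hψ₁.mul hψ₂).eq_zero a, ?_⟩
  have key : a - realAction Φ (ψ₁ * ψ₂) a =
      (a - realAction Φ ψ₁ a) + realAction Φ ψ₁ (a - realAction Φ ψ₂ a) := by
    simp only [map_mul, mul_apply_eq_comp, map_sub]
    abel
  calc dist a (realAction Φ (ψ₁ * ψ₂) a)
      ≤ ‖a - realAction Φ ψ₁ a‖ + ‖a - realAction Φ ψ₂ a‖ := by
        rw [dist_eq_norm, key]
        exact norm_add_le_of_le le_rfl (hψ₁.norm_realAction_apply_le _)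
    _ < ε := by linarith

theorem exists_approx_decomposition {F₁ F₂ : Set X} (hF₁ : IsClosed F₁) (hF₂ : IsClosed F₂)
    {a : B} (ha : a ∈ IdealF Φ (F₁ ∩ F₂)) {ε : ℝ} (hε : 0 < ε) :
    ∃ y ∈ idealSubmodule Φ F₁, ∃ z ∈ idealSubmodule Φ F₂, a - y - z ∈ IdealF Φ (F₁ ∩ F₂) ∧
      ‖a - y - z‖ < ε ∧ ‖y‖ ≤ ‖a‖ ∧ ‖z‖ ≤ ‖a‖ := by
  obtain ⟨ψ, hψ, hψa⟩ := exists_isCutoff_norm_sub_realAction_lt Φ (hF₁.inter hF₂) ha (half_pos hε)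
  set δ := ε / 2 / (‖a‖ + 1)
  have hδ : 0 < δ := by positivity
  obtain ⟨χ₁, χ₂, hχ₁, hχ₂, hχ_one⟩ := exists_isCutoff_add_eqOn_one
    (ψ.isCompact_setOf_le_norm hδ) hF₁ hF₂
    (disjoint_left.2 fun x hx hxF => by simp [hψ.eq_zero x hxF] at hx; linarith)
  have hy := realAction_apply_mem_idealF Φ (hχ₁.mul hψ).eq_zero a
  have hz := realAction_apply_mem_idealF Φ (hχ₂.mul hψ).eq_zero a
  refine ⟨_, antitone_idealF Φ subset_union_left hy, _, antitone_idealF Φ subset_union_left hz,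
    ?_, ?_, (hχ₁.mul hψ).norm_realAction_apply_le a, (hχ₂.mul hψ).norm_realAction_apply_le a⟩
  · exact sub_mem (sub_mem (H := idealSubmodule Φ _) ha (antitone_idealF Φ subset_union_right hy))
      (antitone_idealF Φ subset_union_right hz)
  · have key : a - realAction Φ (χ₁ * ψ) a - realAction Φ (χ₂ * ψ) a =
        (a - realAction Φ ψ a) + realAction Φ (ψ - (χ₁ + χ₂) * ψ) a := by
      simp only [map_sub, map_mul, map_add, sub_apply, add_apply, mul_apply_eq_comp]
      abel
    have hsmall : ‖ψ - (χ₁ + χ₂) * ψ‖ ≤ δ := by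
      refine norm_sub_mul_le hδ.le (fun x hx => hχ_one hx) fun x => ?_
      rw [Real.norm_eq_abs, abs_le]
      simp only [ZeroAtInftyContinuousMap.add_apply]
      constructor <;> linarith [(hχ₁.mem_Icc x).1, (hχ₁.mem_Icc x).2, (hχ₂.mem_Icc x).1,
        (hχ₂.mem_Icc x).2]
    calc ‖a - realAction Φ (χ₁ * ψ) a - realAction Φ (χ₂ * ψ) a‖
        ≤ ‖a - realAction Φ ψ a‖ + δ * ‖a‖ := by
          rw [key]
          exact norm_add_le_of_le le_rfl
            ((norm_realAction_apply_le Φ _ a).trans (by gcongr))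
      _ < ε / 2 + δ * (‖a‖ + 1) := by gcongr; linarith
      _ = ε := by rw [div_mul_cancel₀ _ (by positivity)]; ring

theorem idealF_inter {F₁ F₂ : Set X} (hF₁ : IsClosed F₁) (hF₂ : IsClosed F₂) :
    IdealF Φ (F₁ ∩ F₂) = (idealSubmodule Φ F₁ ⊔ idealSubmodule Φ F₂ : Submodule ℂ B) := by
  refine Subset.antisymm (fun a ha => ?_) ?_
  · obtain ⟨y, hy, z, hz, rfl⟩ := exists_add_eq_of_forall_approx (S := idealSubmodule Φ F₁)
      (T := idealSubmodule Φ F₂) (isClosed_idealF Φ F₁) (isClosed_idealF Φ F₂) (C := 1)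
      (fun b hb ε hε => by simpa using exists_approx_decomposition Φ hF₁ hF₂ hb hε) ha
    exact Submodule.add_mem_sup hy hz
  · show idealSubmodule Φ F₁ ⊔ idealSubmodule Φ F₂ ≤ idealSubmodule Φ (F₁ ∩ F₂)
    exact sup_le (antitone_idealF Φ inter_subset_left) (antitone_idealF Φ inter_subset_right)

end IdealF

theorem statement12_general (Φ : C₀(M, ℂ) →⋆ₙₐ[ℂ] 𝓜(ℂ, A))
    (F₁ F₂ : Set M) (hF₁ : IsClosed F₁) (hF₂ : IsClosed F₂) :
    IdealF Φ (F₁ ∪ F₂) = IdealF Φ F₁ ∩ IdealF Φ F₂ ∧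
    (∀ c d : A, c - d ∈ IdealF Φ (F₁ ∩ F₂) ↔
      ∃ b : A, c - b ∈ IdealF Φ F₁ ∧ d - b ∈ IdealF Φ F₂) ∧
    (∀ a : A, ∃ c d : A, a - (c - d) ∈ IdealF Φ (F₁ ∩ F₂)) := by
  refine ⟨idealF_union Φ hF₁ hF₂, fun c d => ?_, fun a =>
    ⟨a, 0, by rw [sub_zero, sub_self]; exact (idealSubmodule Φ _).zero_mem⟩⟩
  rw [idealF_inter Φ hF₁ hF₂, SetLike.mem_coe, Submodule.mem_sup]
  constructor
  · rintro ⟨y, hy, z, hz, hyz⟩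
    obtain rfl : c = d + (y + z) := by rw [hyz]; abel
    refine ⟨d + z, by rwa [add_left_comm, add_sub_cancel_right], ?_⟩
    rw [sub_add_cancel_left]
    exact (idealSubmodule Φ F₂).neg_mem hz
  · rintro ⟨b, hb₁, hb₂⟩
    exact ⟨c - b, hb₁, -(d - b), (idealSubmodule Φ F₂).neg_mem hb₂, by abel⟩

/-- for a `C₀(M)`-algebra `A` and closed sets `F₁, F₂ ⊆ M`, the sequence
`0 → A_{F₁∪F₂} → A_{F₁} ⊕ A_{F₂} → A_{F₁∩F₂} → 0` is exact, where `A_F = A/I_F`, the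
first map is `[a] ↦ ([a],[a])` and the second is `([a],[b]) ↦ [a−b]`. Stated at the
level of the ideals `I_F`, exactness amounts to:
(1) injectivity of the first map: `I_{F₁∪F₂} = I_{F₁} ∩ I_{F₂}`;
(2) exactness in the middle: `c − d ∈ I_{F₁∩F₂}` iff there is a single `b` with
`c − b ∈ I_{F₁}` and `d − b ∈ I_{F₂}`;
(3) surjectivity of the second map: every class in `A_{F₁∩F₂}` is of the form `[c−d]`. -/
theorem statement12 (Φ : C₀(M, ℂ) →⋆ₙₐ[ℂ] 𝓜(ℂ, A))
    (hcentral : ∀ (φ : C₀(M, ℂ)) (T : 𝓜(ℂ, A)), Φ φ * T = T * Φ φ)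
    (hnondeg : Dense (Submodule.span ℂ
      {x : A | ∃ (φ : C₀(M, ℂ)) (a : A), x = (Φ φ).fst a} : Set A))
    (F₁ F₂ : Set M) (hF₁ : IsClosed F₁) (hF₂ : IsClosed F₂) :
    IdealF Φ (F₁ ∪ F₂) = IdealF Φ F₁ ∩ IdealF Φ F₂ ∧
    (∀ c d : A, c - d ∈ IdealF Φ (F₁ ∩ F₂) ↔
      ∃ b : A, c - b ∈ IdealF Φ F₁ ∧ d - b ∈ IdealF Φ F₂) ∧
    (∀ a : A, ∃ c d : A, a - (c - d) ∈ IdealF Φ (F₁ ∩ F₂)) :=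
  statement12_general Φ F₁ F₂ hF₁ hF₂
end
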